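/- Let μ ∈ (0, 1/4], let p be a prime, let k and ℓ be positive integers with ℓ ≤ (1/8)·√(μ·k), let v ∈ (ℤ/pℤ)^n, and let α ∈ (0,1). If ξ_1, …, ξ_ℓ ∈ ℤ/pℤ satisfy f_{μ,v^k}(ξ_i) > α for each i ∈ [ℓ], then f_{μ,v}(ξ_1 + ⋯ + ξ_ℓ) > α. Equivalently, the ℓ-fold sumset of the level set A_α = {ξ : f_{μ,v^k}(ξ) > α} is contained in B_α = {ξ : f_{μ,v}(ξ) > α}. -/

import Mathlib

/-- The Fourier-side product `f_{μ,v}(ξ) = ∏ᵢ ((1 - μ) + μ cos(2π vᵢ ξ / p))`. -/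
noncomputable def fFun {p : ℕ} [NeZero p] {ι : Type} [Fintype ι]
    (μ : ℝ) (v : ι → ZMod p) (ξ : ZMod p) : ℝ :=
  ∏ i, (1 - μ + μ * Real.cos (2 * Real.pi * ((v i * ξ).val : ℝ) / p))

/-!
Writing `‖x‖ = |sin (π x / p)|`, each factor of `f_{μ,v}(ξ)` is `1 - 2μ ‖vᵢ ξ‖²`, so for
`μ ≤ 1/4` the product is squeezed between `exp (-4μ E(ξ))` and `exp (-2μ E(ξ))`, where
`E(ξ) = ∑ᵢ ‖vᵢ ξ‖²`. Since `f_{μ,v^k} = f_{μ,v}^k`, each `ξⱼ` in the level set has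
`2μk E(ξⱼ) < log (1/α)`. The map `x ↦ ‖x‖` is subadditive, so by Cauchy–Schwarz
`E(ξ₁ + ⋯ + ξ_ℓ) ≤ ℓ ∑ⱼ E(ξⱼ)`, and `ℓ² ≤ μk/64` makes `4μ E(ξ₁ + ⋯ + ξ_ℓ)` smaller than
`log (1/α)`.
-/

open Real Finset

lemma Real.abs_sin_add_le (x y : ℝ) : |sin (x + y)| ≤ |sin x| + |sin y| := by
  rw [sin_add]
  calc |sin x * cos y + cos x * sin y| ≤ |sin x| * |cos y| + |cos x| * |sin y| := by
        simpa only [abs_mul] using abs_add_le (sin x * cos y) (cos x * sin y)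
    _ ≤ |sin x| * 1 + 1 * |sin y| := by
        gcongr
        exacts [abs_cos_le_one y, abs_cos_le_one x]
    _ = |sin x| + |sin y| := by ring

lemma prod_one_sub_le_exp_neg_sum {ι : Type*} (s : Finset ι) (a : ι → ℝ)
    (ha : ∀ i ∈ s, a i ≤ 1) : ∏ i ∈ s, (1 - a i) ≤ exp (-∑ i ∈ s, a i) := by
  rw [← sum_neg_distrib, exp_sum]
  exact prod_le_prod (fun i hi => sub_nonneg.2 (ha i hi)) fun i _ => one_sub_le_exp_neg (a i)

lemma exp_neg_two_mul_le_one_sub {t : ℝ} (ht₀ : 0 ≤ t) (ht₁ : t ≤ 1 / 2) :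
    exp (-(2 * t)) ≤ 1 - t := by
  have hpos : 0 < 1 + 2 * t := by linarith
  calc exp (-(2 * t)) = (exp (2 * t))⁻¹ := exp_neg _
    _ ≤ (1 + 2 * t)⁻¹ := inv_anti₀ hpos (by linarith [add_one_le_exp (2 * t)])
    _ ≤ 1 - t := by
        rw [inv_le_iff_one_le_mul₀ hpos]
        nlinarith

lemma exp_neg_two_mul_sum_le_prod_one_sub {ι : Type*} (s : Finset ι) (a : ι → ℝ)
    (ha : ∀ i ∈ s, 0 ≤ a i ∧ a i ≤ 1 / 2) :
    exp (-(2 * ∑ i ∈ s, a i)) ≤ ∏ i ∈ s, (1 - a i) := by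
  rw [mul_sum, ← sum_neg_distrib, exp_sum]
  exact prod_le_prod (fun i _ => (exp_pos _).le)
    fun i hi => exp_neg_two_mul_le_one_sub (ha i hi).1 (ha i hi).2

section SinNorm

variable {p : ℕ}

noncomputable def sinNorm (x : ZMod p) : ℝ := |sin (π * x.val / p)|

lemma sinNorm_nonneg (x : ZMod p) : 0 ≤ sinNorm x := abs_nonneg _

lemma sinNorm_le_one (x : ZMod p) : sinNorm x ≤ 1 := abs_sin_le_one _

lemma sinNorm_add_le [NeZero p] (x y : ZMod p) : sinNorm (x + y) ≤ sinNorm x + sinNorm y := by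
  have hp : (p : ℝ) ≠ 0 := Nat.cast_ne_zero.2 (NeZero.ne p)
  have hval : ((x + y).val : ℝ) = x.val + y.val - p * ((x.val + y.val) / p : ℕ) := by
    rw [eq_sub_iff_add_eq, ZMod.val_add]
    exact_mod_cast Nat.mod_add_div _ _
  -- reducing `x.val + y.val` mod `p` shifts the angle by a multiple of `π`
  have hangle : π * (x + y).val / p = (π * x.val / p + π * y.val / p) -
      ((x.val + y.val) / p : ℕ) * π := by
    rw [hval]
    field_simp
  unfold sinNorm
  rw [hangle, sin_sub_nat_mul_pi, abs_mul, abs_pow, abs_neg, abs_one, one_pow, one_mul]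
  exact abs_sin_add_le _ _

lemma sinNorm_sum_le [NeZero p] {α : Type*} (s : Finset α) (f : α → ZMod p) :
    sinNorm (∑ j ∈ s, f j) ≤ ∑ j ∈ s, sinNorm (f j) :=
  le_sum_of_subadditive sinNorm (by simp [sinNorm]) sinNorm_add_le s f

variable [NeZero p] {ι : Type} [Fintype ι]

noncomputable def sinEnergy (v : ι → ZMod p) (ξ : ZMod p) : ℝ := ∑ i, sinNorm (v i * ξ) ^ 2

lemma sinEnergy_sum_le {α : Type*} (v : ι → ZMod p) (s : Finset α) (ξ : α → ZMod p) :
    sinEnergy v (∑ j ∈ s, ξ j) ≤ #s * ∑ j ∈ s, sinEnergy v (ξ j) := by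
  have hcoord (i : ι) :
      sinNorm (v i * ∑ j ∈ s, ξ j) ^ 2 ≤ #s * ∑ j ∈ s, sinNorm (v i * ξ j) ^ 2 := calc
      sinNorm (v i * ∑ j ∈ s, ξ j) ^ 2 ≤ (∑ j ∈ s, sinNorm (v i * ξ j)) ^ 2 := by
        rw [mul_sum]
        exact pow_le_pow_left₀ (sinNorm_nonneg _) (sinNorm_sum_le _ _) 2
      _ ≤ #s * ∑ j ∈ s, sinNorm (v i * ξ j) ^ 2 := sq_sum_le_card_mul_sum_sq
  calc sinEnergy v (∑ j ∈ s, ξ j) ≤ ∑ i, #s * ∑ j ∈ s, sinNorm (v i * ξ j) ^ 2 :=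
        sum_le_sum fun i _ => hcoord i
    _ = #s * ∑ j ∈ s, sinEnergy v (ξ j) := by
        rw [← mul_sum, sum_comm]
        rfl

lemma fFun_eq_prod_sinNorm (μ : ℝ) (v : ι → ZMod p) (ξ : ZMod p) :
    fFun μ v ξ = ∏ i, (1 - 2 * μ * sinNorm (v i * ξ) ^ 2) := by
  refine prod_congr rfl fun i _ => ?_
  rw [sinNorm, sq_abs, mul_assoc 2, mul_div_assoc, cos_two_mul, cos_sq']
  ring

lemma fFun_prod_fst {κ : Type} [Fintype κ] (μ : ℝ) (v : ι → ZMod p) (ξ : ZMod p) :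
    fFun μ (fun x : ι × κ => v x.1) ξ = fFun μ v ξ ^ Fintype.card κ := by
  simp only [fFun, Fintype.prod_prod_type, prod_const, card_univ, prod_pow]

lemma fFun_nonneg {μ : ℝ} (hμ : μ ≤ 1 / 2) (v : ι → ZMod p) (ξ : ZMod p) : 0 ≤ fFun μ v ξ := by
  rw [fFun_eq_prod_sinNorm]
  refine prod_nonneg fun i _ => ?_
  nlinarith [sinNorm_nonneg (v i * ξ), sinNorm_le_one (v i * ξ)]

lemma fFun_le_exp_neg_sinEnergy {μ : ℝ} (hμ : μ ≤ 1 / 2) (v : ι → ZMod p) (ξ : ZMod p) :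
    fFun μ v ξ ≤ exp (-(2 * μ * sinEnergy v ξ)) := by
  rw [fFun_eq_prod_sinNorm, sinEnergy, mul_sum]
  refine prod_one_sub_le_exp_neg_sum _ _ fun i _ => ?_
  nlinarith [sinNorm_nonneg (v i * ξ), sinNorm_le_one (v i * ξ)]

lemma exp_neg_sinEnergy_le_fFun {μ : ℝ} (hμ₀ : 0 ≤ μ) (hμ : μ ≤ 1 / 4) (v : ι → ZMod p)
    (ξ : ZMod p) : exp (-(4 * μ * sinEnergy v ξ)) ≤ fFun μ v ξ := by
  have hE : 4 * μ * sinEnergy v ξ = 2 * ∑ i, 2 * μ * sinNorm (v i * ξ) ^ 2 := by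
    rw [sinEnergy, mul_sum, mul_sum]
    exact sum_congr rfl fun _ _ => by ring
  rw [fFun_eq_prod_sinNorm, hE]
  refine exp_neg_two_mul_sum_le_prod_one_sub _ _ fun i _ => ⟨by positivity, ?_⟩
  nlinarith [sinNorm_nonneg (v i * ξ), sinNorm_le_one (v i * ξ)]

lemma mul_sinEnergy_lt_neg_log {μ α : ℝ} (hα : 0 < α) (hμ : μ ≤ 1 / 2) (k : ℕ)
    (v : ι → ZMod p) {ξ : ZMod p} (hξ : α < fFun μ v ξ ^ k) :
    2 * μ * k * sinEnergy v ξ < -log α := by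
  have hlt : α < exp (-(2 * μ * k * sinEnergy v ξ)) := calc
    α < fFun μ v ξ ^ k := hξ
    _ ≤ exp (-(2 * μ * sinEnergy v ξ)) ^ k :=
        pow_le_pow_left₀ (fFun_nonneg hμ v ξ) (fFun_le_exp_neg_sinEnergy hμ v ξ) k
    _ = exp (-(2 * μ * k * sinEnergy v ξ)) := by rw [← exp_nat_mul]; ring_nf
  linarith [(log_lt_iff_lt_exp hα).2 hlt]

end SinNorm

theorem sumset_of_level_set_general
    (μ : ℝ) (hμ : μ ∈ Set.Ioc (0 : ℝ) (1 / 4)) (p : ℕ) [Fact p.Prime]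
    (k l : ℕ) (hk : 0 < k)
    (hlk : (l : ℝ) ≤ (1 / 8) * Real.sqrt (μ * k))
    (n : ℕ) (v : Fin n → ZMod p) (α : ℝ) (hα : α ∈ Set.Ioo (0 : ℝ) 1)
    (ξ : Fin l → ZMod p)
    (hξ : ∀ i, α < fFun μ (fun x : Fin n × Fin k => v x.1) (ξ i)) :
    α < fFun μ v (∑ i, ξ i) := by
  obtain ⟨hμ₀, hμ⟩ := hμ
  obtain ⟨hα₀, hα₁⟩ := hα
  have hL : 0 < -log α := neg_pos.2 (log_neg hα₀ hα₁)
  have hlevel : ∀ j, 2 * μ * k * sinEnergy v (ξ j) < -log α := fun j =>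
    mul_sinEnergy_lt_neg_log hα₀ (by linarith) k v (by simpa [fFun_prod_fst] using hξ j)
  have hl : (l : ℝ) ^ 2 ≤ μ * k / 64 := by
    have h8l : 8 * (l : ℝ) ≤ √(μ * k) := by linarith
    nlinarith [(le_sqrt (by positivity) (by positivity)).1 h8l]
  have hμk : 0 < 2 * μ * k := by positivity
  have hsum : 2 * μ * k * sinEnergy v (∑ j, ξ j) ≤ μ * k / 64 * -log α := calc
    2 * μ * k * sinEnergy v (∑ j, ξ j) ≤ 2 * μ * k * (l * ∑ j, sinEnergy v (ξ j)) := by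
        simpa using mul_le_mul_of_nonneg_left (sinEnergy_sum_le v univ ξ) hμk.le
    _ = l * ∑ j, 2 * μ * k * sinEnergy v (ξ j) := by rw [mul_left_comm, mul_sum]
    _ ≤ l * (l * -log α) := by
        gcongr
        simpa using sum_le_sum fun j (_ : j ∈ univ) => (hlevel j).le
    _ ≤ μ * k / 64 * -log α := by nlinarith
  have henergy : sinEnergy v (∑ j, ξ j) ≤ -log α / 128 :=
    le_of_mul_le_mul_left (by linarith) hμk
  calc α = exp (-(-log α)) := by rw [neg_neg, exp_log hα₀]
    _ < exp (-(4 * μ * sinEnergy v (∑ j, ξ j))) := exp_lt_exp.2 (by nlinarith)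
    _ ≤ fFun μ v (∑ j, ξ j) := exp_neg_sinEnergy_le_fFun hμ₀.le hμ v _

/-- **Claim 4.2.** Let `μ ∈ (0, 1/4]`, `p` prime, `k, ℓ ≥ 1` with `ℓ ≤ (1/8)√(μk)`,
`v ∈ (ℤ/pℤ)ⁿ`, and `α ∈ (0,1)`. If `ξ₁, …, ξ_ℓ ∈ ℤ/pℤ` satisfy `f_{μ,v^k}(ξᵢ) > α` for each
`i`, then `f_{μ,v}(ξ₁ + ⋯ + ξ_ℓ) > α`; i.e. the `ℓ`-fold sumset of the level set
`A_α = {ξ : f_{μ,v^k}(ξ) > α}` is contained in `B_α = {ξ : f_{μ,v}(ξ) > α}`. Here `v^k`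
denotes the concatenation of `k` copies of `v`, so that `f_{μ,v^k} = (f_{μ,v})^k`. -/
theorem sumset_of_level_set
    (μ : ℝ) (hμ : μ ∈ Set.Ioc (0 : ℝ) (1 / 4)) (p : ℕ) [Fact p.Prime]
    (k l : ℕ) (hk : 0 < k) (hl : 0 < l)
    (hlk : (l : ℝ) ≤ (1 / 8) * Real.sqrt (μ * k))
    (n : ℕ) (v : Fin n → ZMod p) (α : ℝ) (hα : α ∈ Set.Ioo (0 : ℝ) 1)
    (ξ : Fin l → ZMod p)
    (hξ : ∀ i, α < fFun μ (fun x : Fin n × Fin k => v x.1) (ξ i)) :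
    α < fFun μ v (∑ i, ξ i) :=
  sumset_of_level_set_general μ hμ p k l hk hlk n v α hα ξ hξ
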